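/- arXiv:1901.03689 — 2 statements merged into one kernel-verified Lean document; each statement's English description precedes it below -/
import Mathlib

section
/- Let G be a finite simple connected graph on vertex set V, let U ⊊ V be nonempty, and let T be a tree on U rooted at r whose edges are edges of G and which satisfies invariants I1 and I2 with respect to G. Let C be a connected component of the induced subgraph G[V∖U]. Then the set N(C) of vertices of U adjacent in G to some vertex of C is nonempty and has a unique deepest element x, and all other elements of N(C) are proper ancestors of x in T. Let y ∈ C be adjacent to x in G, and let T⁺ be the tree on U⁺ = U ∪ {y} obtained from T by adding y as a child of x. Then T⁺ satisfies invariants I1 and I2 with respect to G; moreover, every connected component of the induced subgraph G[C∖{y}] contains a vertex adjacent to y in G. -/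
namespace StreamDFS

/-- `u` is an ancestor of `v` in the tree `T` rooted at `r`:
`u` lies on (every) path in `T` from `r` to `v`. -/
def IsAncestor {V : Type*} (T : SimpleGraph V) (r u v : V) : Prop :=
  ∀ p : T.Walk r v, p.IsPath → u ∈ p.support

/-- `u` and `v` are comparable in the tree `T` rooted at `r`:
one is an ancestor of the other. -/
def Cmp {V : Type*} (T : SimpleGraph V) (r u v : V) : Prop :=
  IsAncestor T r u v ∨ IsAncestor T r v u

/-- `u` is a proper ancestor of `v` in the tree `T` rooted at `r`. -/
def ProperAncestor {V : Type*} (T : SimpleGraph V) (r u v : V) : Prop :=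
  IsAncestor T r u v ∧ u ≠ v

/-- The depth (level) of `v` in the tree `T` rooted at `r`. -/
noncomputable def depth {V : Type*} (T : SimpleGraph V) (r v : V) : ℕ := T.dist r v

/-- `T` is a tree on the vertex set `U` all of whose edges are edges of `G`:
its edges lie within `U` and it induces a tree on `U`. -/
def TreeOn {V : Type*} (G T : SimpleGraph V) (U : Set V) : Prop :=
  T ≤ G ∧ (∀ u v, T.Adj u v → u ∈ U ∧ v ∈ U) ∧ (T.induce U).IsTree

/-- Invariant `I₁`: every edge of `G` with both endpoints in `U` joins two
vertices comparable in `T`. -/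
def Inv1 {V : Type*} (G T : SimpleGraph V) (U : Set V) (r : V) : Prop :=
  ∀ u v, G.Adj u v → u ∈ U → v ∈ U → Cmp T r u v

/-- Invariant `I₂`: for every connected component of `G[V∖U]`, the vertices of `U`
adjacent in `G` to that component are pairwise comparable in `T`. -/
def Inv2 {V : Type*} (G T : SimpleGraph V) (U : Set V) (r : V) : Prop :=
  ∀ u v (hu : u ∉ U) (hv : v ∉ U),
    (G.induce Uᶜ).Reachable ⟨u, hu⟩ ⟨v, hv⟩ →
    ∀ w z, w ∈ U → z ∈ U → G.Adj w u → G.Adj z v → Cmp T r w z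

/-- The connected component of `G[V∖U]` containing `c₀` (for `c₀ ∉ U`). -/
def compOf {V : Type*} (G : SimpleGraph V) (U : Set V) (c₀ : V) : Set V :=
  {a | ∃ (hc : c₀ ∉ U) (ha : a ∉ U), (G.induce Uᶜ).Reachable ⟨c₀, hc⟩ ⟨a, ha⟩}

section Helpers

variable {V : Type*} {G T : SimpleGraph V} {U : Set V} {r x y : V}

lemma anc_refl (T : SimpleGraph V) (r v : V) : IsAncestor T r v v :=
  fun p _ => p.end_mem_support

/-- Transfer a walk in an induced subgraph to another induced subgraph containing
its support. -/
lemma reach_induce_of_support {s t : Set V} :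
    ∀ {a b : s} (p : (G.induce s).Walk a b), (∀ v ∈ p.support, ↑v ∈ t) →
      ∃ (ha : (a : V) ∈ t) (hb : (b : V) ∈ t),
        (G.induce t).Reachable ⟨a, ha⟩ ⟨b, hb⟩ := by
  intro a b p
  induction p with
  | nil =>
    rename_i u
    intro h
    have ha : (u : V) ∈ t := h u (SimpleGraph.Walk.start_mem_support _)
    exact ⟨ha, ha, SimpleGraph.Reachable.refl _⟩
  | cons h' p ih =>
    intro h
    rename_i a c b
    have ha : (a : V) ∈ t := h a (SimpleGraph.Walk.start_mem_support _)
    obtain ⟨hc, hb, hr⟩ := ih (fun v hv => h v (by simp [SimpleGraph.Walk.support_cons, hv]))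
    have hadj : (G.induce t).Adj ⟨a, ha⟩ ⟨c, hc⟩ := h'
    exact ⟨ha, hb, hadj.reachable.trans hr⟩

lemma reach_induce_mono {s t : Set V} (hst : s ⊆ t) {a b : s}
    (h : (G.induce s).Reachable a b) :
    (G.induce t).Reachable ⟨a, hst a.2⟩ ⟨b, hst b.2⟩ := by
  obtain ⟨p⟩ := h
  obtain ⟨ha, hb, hr⟩ := reach_induce_of_support p (fun v _ => hst v.2)
  exact hr

/-- A walk from outside `U` to inside `U` passes a frontier edge. -/
lemma exists_frontier (G : SimpleGraph V) (U : Set V) :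
    ∀ {a r : V} (_ : G.Walk a r) (ha : a ∉ U), r ∈ U →
      ∃ x ∈ U, ∃ b, ∃ hb : b ∉ U, G.Adj x b ∧ (G.induce Uᶜ).Reachable ⟨a, ha⟩ ⟨b, hb⟩ := by
  intro a r p
  induction p with
  | nil => rename_i u; intro ha hr; exact absurd hr ha
  | cons h q ih =>
    rename_i a c r
    intro ha hr
    by_cases hc : c ∈ U
    · exact ⟨c, hc, a, ha, h.symm, SimpleGraph.Reachable.refl _⟩
    · obtain ⟨x, hx, b, hb, hadj, hreach⟩ := ih hc hr
      have hadj' : (G.induce Uᶜ).Adj ⟨a, ha⟩ ⟨c, hc⟩ := h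
      exact ⟨x, hx, b, hb, hadj, hadj'.reachable.trans hreach⟩

lemma treeOn_reachable (hT : TreeOn G T U) {u v : V} (hu : u ∈ U) (hv : v ∈ U) :
    T.Reachable u v := by
  have h := hT.2.2.isConnected.preconnected ⟨u, hu⟩ ⟨v, hv⟩
  exact h.map (SimpleGraph.Embedding.induce U).toHom

lemma depth_le_of_ancestor (hT : TreeOn G T U) (hr : r ∈ U) {u v : V}
    (hv : v ∈ U) (h : IsAncestor T r u v) :
    T.dist r u ≤ T.dist r v ∧ (T.dist r u = T.dist r v → u = v) := by
  classical
  obtain ⟨p, hp, hlen⟩ := (treeOn_reachable hT hr hv).exists_path_of_dist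
  have hu : u ∈ p.support := h p hp
  have h1 : T.dist r u ≤ (p.takeUntil u hu).length := SimpleGraph.dist_le _
  have h2 := SimpleGraph.Walk.length_takeUntil_le p hu
  constructor
  · omega
  · intro heq
    have hspec := p.take_spec hu
    have : (p.takeUntil u hu).length + (p.dropUntil u hu).length = p.length := by
      have := congrArg SimpleGraph.Walk.length hspec
      rwa [SimpleGraph.Walk.length_append] at this
    have : (p.dropUntil u hu).length = 0 := by omega
    exact SimpleGraph.Walk.eq_of_length_eq_zero this

lemma sup_edge_adj {u v : V} (hxy : x ≠ y) :
    (T ⊔ SimpleGraph.fromEdgeSet {s(x, y)}).Adj u v ↔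
      T.Adj u v ∨ (u = x ∧ v = y) ∨ (u = y ∧ v = x) := by
  simp only [SimpleGraph.sup_adj, SimpleGraph.fromEdgeSet_adj, Set.mem_singleton_iff,
    Sym2.eq_iff]
  constructor
  · rintro (h | ⟨(⟨rfl, rfl⟩ | ⟨rfl, rfl⟩), hne⟩)
    · exact Or.inl h
    · exact Or.inr (Or.inl ⟨rfl, rfl⟩)
    · exact Or.inr (Or.inr ⟨rfl, rfl⟩)
  · rintro (h | ⟨rfl, rfl⟩ | ⟨rfl, rfl⟩)
    · exact Or.inl h
    · exact Or.inr ⟨Or.inl ⟨rfl, rfl⟩, hxy⟩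
    · exact Or.inr ⟨Or.inr ⟨rfl, rfl⟩, hxy.symm⟩

lemma adj_to_y (hxy : x ≠ y) (hTy : ∀ u, ¬ T.Adj u y) {u : V}
    (h : (T ⊔ SimpleGraph.fromEdgeSet {s(x, y)}).Adj u y) : u = x := by
  rcases (sup_edge_adj hxy).1 h with h' | h' | h'
  · exact absurd h' (hTy u)
  · exact h'.1
  · exact h'.1.trans h'.2

lemma walk_avoid (hxy : x ≠ y) :
    ∀ {a b : V} (p : (T ⊔ SimpleGraph.fromEdgeSet {s(x, y)}).Walk a b),
      y ∉ p.support → ∃ q : T.Walk a b, q.support = p.support := by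
  intro a b p
  induction p with
  | nil => exact fun _ => ⟨SimpleGraph.Walk.nil, rfl⟩
  | cons h q ih =>
    rename_i a c b
    intro hy
    simp only [SimpleGraph.Walk.support_cons, List.mem_cons, not_or] at hy
    obtain ⟨q', hq'⟩ := ih hy.2
    have hc : c ≠ y := fun hc => hy.2 (hc ▸ q.start_mem_support)
    have ha : a ≠ y := fun ha => hy.1 ha.symm
    have hT : T.Adj a c := by
      rcases (sup_edge_adj hxy).1 h with h' | ⟨rfl, rfl⟩ | ⟨rfl, rfl⟩
      · exact h'
      · exact absurd rfl hc
      · exact absurd rfl ha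
    exact ⟨SimpleGraph.Walk.cons hT q', by simp [SimpleGraph.Walk.support_cons, hq']⟩

lemma path_avoid (hxy : x ≠ y) (hTy : ∀ u, ¬ T.Adj u y) :
    ∀ {a b : V} (p : (T ⊔ SimpleGraph.fromEdgeSet {s(x, y)}).Walk a b),
      p.IsPath → a ≠ y → b ≠ y → y ∉ p.support := by
  intro a b p
  induction p with
  | nil => rename_i u; intro _ hu _; simpa using fun h => hu h.symm
  | cons h q ih =>
    rename_i a c b
    intro hp ha hb
    simp only [SimpleGraph.Walk.support_cons, List.mem_cons, not_or]
    refine ⟨fun h' => ha h'.symm, ?_⟩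
    by_cases hc : c = y
    · exfalso
      have hax : a = x := adj_to_y hxy hTy (hc ▸ h)
      cases q with
      | nil => exact hb hc
      | cons h' q' =>
        rename_i d
        have hdx : d = x := adj_to_y hxy hTy (hc ▸ h'.symm)
        have hns : a ∉ (SimpleGraph.Walk.cons h' q').support :=
          ((SimpleGraph.Walk.cons_isPath_iff _ _).1 hp).2
        apply hns
        simp only [SimpleGraph.Walk.support_cons, List.mem_cons]
        subst hax
        subst hdx
        exact Or.inr q'.start_mem_support
    · exact ih hp.of_cons hc hb

lemma lift_anc (hxy : x ≠ y) (hTy : ∀ u, ¬ T.Adj u y) {u v : V}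
    (hr : r ≠ y) (hv : v ≠ y) (h : IsAncestor T r u v) :
    IsAncestor (T ⊔ SimpleGraph.fromEdgeSet {s(x, y)}) r u v := by
  intro p hp
  have hns := path_avoid hxy hTy p hp hr hv
  obtain ⟨q, hq⟩ := walk_avoid hxy p hns
  have hqp : q.IsPath := by
    rw [SimpleGraph.Walk.isPath_def, hq]
    exact hp.support_nodup
  have := h q hqp
  rwa [hq] at this

lemma anc_to_y (hxy : x ≠ y) (hTy : ∀ u, ¬ T.Adj u y) {u : V}
    (hr : r ≠ y) (h : IsAncestor T r u x) :
    IsAncestor (T ⊔ SimpleGraph.fromEdgeSet {s(x, y)}) r u y := by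
  intro p hp
  cases hrev : p.reverse with
  | nil => exact absurd rfl hr
  | cons h' q' =>
    rename_i d
    have hp' : p.reverse.IsPath := hp.reverse
    rw [hrev] at hp'
    have hd : d = x := adj_to_y hxy hTy h'.symm
    subst hd
    have hyq : y ∉ q'.support := ((SimpleGraph.Walk.cons_isPath_iff _ _).1 hp').2
    have hq'p : q'.reverse.IsPath := hp'.of_cons.reverse
    have hyqr : y ∉ q'.reverse.support := by
      rw [SimpleGraph.Walk.support_reverse]
      simpa using hyq
    obtain ⟨w, hw⟩ := walk_avoid hxy q'.reverse hyqr
    have hwp : w.IsPath := by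
      rw [SimpleGraph.Walk.isPath_def, hw]
      exact hq'p.support_nodup
    have hu : u ∈ w.support := h w hwp
    rw [hw, SimpleGraph.Walk.support_reverse, List.mem_reverse] at hu
    have : u ∈ p.reverse.support := by
      rw [hrev, SimpleGraph.Walk.support_cons]
      exact List.mem_cons_of_mem _ hu
    rwa [SimpleGraph.Walk.support_reverse, List.mem_reverse] at this

end Helpers

/-- Inductive step of Section 3.1.  Given a partially built DFS tree `T` on `U ⊊ V`
satisfying invariants `I₁` and `I₂`, and a component `C` of `G[V∖U]` (the one
containing `c₀`): the set `N(C)` of vertices of `U` adjacent to `C` is nonempty, it has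
a unique deepest element `x` of which all other elements are proper ancestors, and for
any `y ∈ C` adjacent to `x`, adding `y` as a child of `x` preserves `I₁` and `I₂`;
moreover every component of `G[C∖{y}]` contains a neighbour of `y`. -/
theorem add_lowest_edge {V : Type*} [Fintype V]
    (G T : SimpleGraph V) (U : Set V) (r : V)
    (hG : G.Connected) (hU : U.Nonempty) (hUV : U ≠ Set.univ) (hr : r ∈ U)
    (hT : TreeOn G T U) (h1 : Inv1 G T U r) (h2 : Inv2 G T U r)
    (c₀ : V) (hc₀ : c₀ ∉ U) :
    ∃ x, x ∈ U ∧ (∃ a ∈ compOf G U c₀, G.Adj x a) ∧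
      (∀ w, w ∈ U → (∃ a ∈ compOf G U c₀, G.Adj w a) → depth T r w ≤ depth T r x) ∧
      (∀ w, w ∈ U → (∃ a ∈ compOf G U c₀, G.Adj w a) → w ≠ x → ProperAncestor T r w x) ∧
      (∀ y, y ∈ compOf G U c₀ → G.Adj x y →
        Inv1 G (T ⊔ SimpleGraph.fromEdgeSet {s(x, y)}) (insert y U) r ∧
        Inv2 G (T ⊔ SimpleGraph.fromEdgeSet {s(x, y)}) (insert y U) r ∧
        (∀ a (ha : a ∈ compOf G U c₀) (hay : a ≠ y),
          ∃ b, ∃ (hb : b ∈ compOf G U c₀) (hby : b ≠ y),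
            (G.induce (compOf G U c₀ \ {y})).Reachable ⟨a, ⟨ha, hay⟩⟩ ⟨b, ⟨hb, hby⟩⟩ ∧
            G.Adj y b)) := by
  classical
  set C : Set V := compOf G U c₀ with hCdef
  have hCc₀ : c₀ ∈ C := ⟨hc₀, hc₀, SimpleGraph.Reachable.refl _⟩
  have hCnotU : ∀ {a}, a ∈ C → a ∉ U := fun h => h.2.1
  have hCreach : ∀ a b (haU : a ∉ U) (hbU : b ∉ U), a ∈ C →
      (G.induce Uᶜ).Reachable ⟨a, haU⟩ ⟨b, hbU⟩ → b ∈ C := by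
    rintro a b haU hbU ⟨hc, ha', hr1⟩ hr2
    exact ⟨hc, hbU, hr1.trans hr2⟩
  have hCr : ∀ a (h : a ∈ C), (G.induce Uᶜ).Reachable ⟨c₀, hc₀⟩ ⟨a, hCnotU h⟩ := by
    rintro a ⟨hc, ha', hr1⟩
    exact hr1
  -- the neighbourhood N(C)
  set N : Set V := {w | w ∈ U ∧ ∃ a ∈ C, G.Adj w a} with hNdef
  have hNne : N.Nonempty := by
    obtain ⟨p⟩ := hG.preconnected c₀ r
    obtain ⟨x0, hx0, b, hb, hadj, hreach⟩ := exists_frontier G U p hc₀ hr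
    exact ⟨x0, hx0, b, hCreach c₀ b hc₀ hb hCc₀ hreach, hadj⟩
  have hNcmp : ∀ w z, w ∈ N → z ∈ N → Cmp T r w z := by
    rintro w z ⟨hw, a, haC, hwa⟩ ⟨hz, b, hbC, hzb⟩
    exact h2 a b (hCnotU haC) (hCnotU hbC)
      ((hCr a haC).symm.trans (hCr b hbC)) w z hw hz hwa hzb
  obtain ⟨x, hxN, hxmax⟩ := Set.exists_max_image N (depth T r) (Set.toFinite N) hNne
  have hproper : ∀ w, w ∈ U → (∃ a ∈ C, G.Adj w a) → w ≠ x → ProperAncestor T r w x := by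
    intro w hw hadj hne
    rcases hNcmp w x ⟨hw, hadj⟩ hxN with h | h
    · exact ⟨h, hne⟩
    · exfalso
      have hle := depth_le_of_ancestor hT hr hw h
      have hge : depth T r w ≤ depth T r x := hxmax w ⟨hw, hadj⟩
      exact hne (hle.2 (le_antisymm hle.1 hge)).symm
  have hancx : ∀ w, w ∈ U → (∃ a ∈ C, G.Adj w a) → IsAncestor T r w x := by
    intro w hw hadj
    by_cases hwx : w = x
    · exact hwx ▸ anc_refl T r x
    · exact (hproper w hw hadj hwx).1
  refine ⟨x, hxN.1, hxN.2, fun w hw ha => hxmax w ⟨hw, ha⟩, hproper, ?_⟩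
  intro y hyC hxyadj
  have hyU : y ∉ U := hCnotU hyC
  have hxy : x ≠ y := fun h => hyU (h ▸ hxN.1)
  have hry : r ≠ y := fun h => hyU (h ▸ hr)
  have hTy : ∀ u, ¬ T.Adj u y := fun u hadj => hyU (hT.2.1 u y hadj).2
  have hancY : ∀ w, w ∈ U → (∃ a ∈ C, G.Adj w a) →
      IsAncestor (T ⊔ SimpleGraph.fromEdgeSet {s(x, y)}) r w y :=
    fun w hw ha => anc_to_y hxy hTy hry (hancx w hw ha)
  refine ⟨?_, ?_, ?_⟩
  · -- Inv1
    intro u v huv hu hv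
    rcases Set.mem_insert_iff.1 hu with rfl | hu'
    · rcases Set.mem_insert_iff.1 hv with rfl | hv'
      · exact absurd rfl huv.ne
      · exact Or.inr (hancY v hv' ⟨u, hyC, huv.symm⟩)
    · rcases Set.mem_insert_iff.1 hv with rfl | hv'
      · exact Or.inl (hancY u hu' ⟨v, hyC, huv⟩)
      · rcases h1 u v huv hu' hv' with h | h
        · exact Or.inl (lift_anc hxy hTy hry (fun hh => hyU (hh ▸ hv')) h)
        · exact Or.inr (lift_anc hxy hTy hry (fun hh => hyU (hh ▸ hu')) h)
  · -- Inv2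
    intro u v hu hv hreach w z hw hz hwu hzv
    have huU : u ∉ U := fun h => hu (Set.mem_insert_of_mem _ h)
    have huy : u ≠ y := fun h => hu (h ▸ Set.mem_insert _ _)
    have hvU : v ∉ U := fun h => hv (Set.mem_insert_of_mem _ h)
    have hvy : v ≠ y := fun h => hv (h ▸ Set.mem_insert _ _)
    have hsub : (insert y U)ᶜ ⊆ Uᶜ := Set.compl_subset_compl.2 (Set.subset_insert _ _)
    have hreach' : (G.induce Uᶜ).Reachable ⟨u, huU⟩ ⟨v, hvU⟩ :=
      reach_induce_mono hsub hreach
    rcases Set.mem_insert_iff.1 hw with rfl | hwU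
    · rcases Set.mem_insert_iff.1 hz with rfl | hzU
      · exact Or.inl (anc_refl _ _ _)
      · -- w = y, z ∈ U
        have huC : u ∈ C := hCreach w u hyU huU hyC
          (SimpleGraph.Adj.reachable (by exact hwu))
        have hvC : v ∈ C := hCreach u v huU hvU huC hreach'
        exact Or.inr (hancY z hzU ⟨v, hvC, hzv⟩)
    · rcases Set.mem_insert_iff.1 hz with rfl | hzU
      · -- z = y, w ∈ U
        have hvC : v ∈ C := hCreach z v hyU hvU hyC
          (SimpleGraph.Adj.reachable (by exact hzv))
        have huC : u ∈ C := hCreach v u hvU huU hvC hreach'.symm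
        exact Or.inl (hancY w hwU ⟨u, huC, hwu⟩)
      · rcases h2 u v huU hvU hreach' w z hwU hzU hwu hzv with h | h
        · exact Or.inl (lift_anc hxy hTy hry (fun hh => hyU (hh ▸ hzU)) h)
        · exact Or.inr (lift_anc hxy hTy hry (fun hh => hyU (hh ▸ hwU)) h)
  · -- components of G[C ∖ {y}] all touch y
    intro a haC hay
    have haU : a ∉ U := hCnotU haC
    have hr_ay : (G.induce Uᶜ).Reachable ⟨a, haU⟩ ⟨y, hyU⟩ :=
      (hCr a haC).symm.trans (hCr y hyC)
    obtain ⟨p0⟩ := hr_ay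
    set p : (G.induce Uᶜ).Walk ⟨a, haU⟩ ⟨y, hyU⟩ := p0.bypass with hpdef
    have hp : p.IsPath := p0.bypass_isPath
    have hne : (⟨y, hyU⟩ : (Uᶜ : Set V)) ≠ ⟨a, haU⟩ :=
      fun h => hay (congrArg Subtype.val h).symm
    obtain ⟨b', hadj, q, hq⟩ :=
      SimpleGraph.Walk.not_nil_iff.1 (SimpleGraph.Walk.not_nil_of_ne hne (p := p.reverse))
    have hprev : p.reverse.IsPath := hp.reverse
    rw [hq] at hprev
    have hyb : G.Adj y (b' : V) := hadj
    have hbC : (b' : V) ∈ C := hCreach y b' hyU b'.2 hyC hadj.reachable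
    have hby : (b' : V) ≠ y := fun h => hadj.ne (Subtype.ext h.symm)
    have hyq : (⟨y, hyU⟩ : (Uᶜ : Set V)) ∉ q.support :=
      ((SimpleGraph.Walk.cons_isPath_iff _ _).1 hprev).2
    have hsupp : ∀ v ∈ q.reverse.support, (v : V) ∈ C \ {y} := by
      intro v hv
      rw [SimpleGraph.Walk.support_reverse, List.mem_reverse] at hv
      constructor
      · have hrv : (G.induce Uᶜ).Reachable b' v := ⟨q.takeUntil v hv⟩
        exact hCreach b' v b'.2 v.2 hbC hrv
      · intro hmem
        apply hyq
        have : v = ⟨y, hyU⟩ := Subtype.ext hmem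
        rwa [this] at hv
    obtain ⟨ha2, hb2, hrr⟩ := reach_induce_of_support q.reverse hsupp
    exact ⟨b', hbC, hby, hrr, hyb⟩

end StreamDFS
end

section
/- Let G be a finite simple connected graph on vertex set V, let U ⊊ V be nonempty, and let T be a tree on U rooted at r whose edges are edges of G and which satisfies invariants I1 and I2 with respect to G. Let C be a connected component of the induced subgraph G[V∖U], let x be the deepest vertex of U adjacent in G to C, and let y ∈ C be adjacent to x in G. Then there exists a DFS tree T* of G rooted at r whose edge set contains the edge set of T, in which {x, y} is a tree edge and the vertex set of C is exactly the vertex set of the subtree of T* rooted at y. Consequently, for every edge {w, z} of G with z ∈ C and w ∈ U, the vertex w is an ancestor of z in T*, i.e., every such edge other than {x, y} is a back edge of T*. -/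
namespace StreamDFS

/-! Complete `T` greedily: while some component `C` of `G[V∖U]` is left, hang a neighbour
`y ∈ C` of the deepest attachment `x` of `C` below `x`. By `I₂` and the choice of `x`, every
attachment of `C` is an ancestor of `x`, hence of `y`, and this is why `I₁` and `I₂` survive
the step. The induction carries one more invariant: in the final tree, the ancestors in `U` of
a vertex outside `U` are exactly the ancestors of the attachments of its component. Applied
before and after the first step `x — y`, it shows that the edges from `U` into `C` are back
edges and that `C` is the subtree below `y`. -/

open SimpleGraph

def IsDFSTree {V : Type*} (G Ts : SimpleGraph V) (r : V) : Prop :=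
  Ts ≤ G ∧ Ts.IsTree ∧ ∀ u v, G.Adj u v → Cmp Ts r u v

def IsAttachment {V : Type*} (G : SimpleGraph V) (U : Set V) (v w : V) : Prop :=
  w ∈ U ∧ ∃ a ∈ compOf G U v, G.Adj w a

def HangsBelowAttachments {V : Type*} (G T Ts : SimpleGraph V) (U : Set V) (r : V) : Prop :=
  ∀ v ∉ U, ∀ u ∈ U, IsAncestor Ts r u v ↔ ∃ w, IsAttachment G U v w ∧ IsAncestor T r u w

section Ancestor

variable {V : Type*} {S S' : SimpleGraph V} {r u v w : V}

theorem isAncestor_refl (S : SimpleGraph V) (r u : V) : IsAncestor S r u u :=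
  fun p _ => p.end_mem_support

theorem IsAncestor.trans (huv : IsAncestor S r u v) (hvw : IsAncestor S r v w) :
    IsAncestor S r u w := by
  classical
  intro p hp
  have hv := hvw p hp
  exact p.support_takeUntil_subset_support hv (huv _ (hp.takeUntil hv))

theorem isAncestor_iff_mem_support (hS : S.IsAcyclic) {p : S.Walk r v} (hp : p.IsPath) :
    IsAncestor S r u v ↔ u ∈ p.support :=
  ⟨fun h => h p hp, fun hu q hq => by
    rwa [show q = p from congrArg Subtype.val ((hS.subsingleton_path _ _).elim ⟨q, hq⟩ ⟨p, hp⟩)]⟩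

theorem IsAncestor.anti (hle : S ≤ S') (h : IsAncestor S' r u v) : IsAncestor S r u v :=
  fun p hp => by simpa using h (p.mapLe hle) (hp.mapLe hle)

theorem IsAncestor.mono (hle : S ≤ S') (hS' : S'.IsAcyclic) (hv : S.Reachable r v)
    (h : IsAncestor S r u v) : IsAncestor S' r u v := by
  classical
  obtain ⟨p⟩ := hv
  rw [isAncestor_iff_mem_support hS' (p.bypass_isPath.mapLe hle), Walk.support_mapLe_eq_support]
  exact h _ p.bypass_isPath

/-- The paths to `u` and to `v` are both prefixes of the path to `w`. -/
theorem cmp_of_isAncestor_of_isAncestor (hS : S.IsAcyclic) (hw : S.Reachable r w)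
    (hu : IsAncestor S r u w) (hv : IsAncestor S r v w) : Cmp S r u v := by
  classical
  obtain ⟨p⟩ := hw
  have hp := p.bypass_isPath
  have hu' := hu _ hp
  have hv' := hv _ hp
  rcases List.prefix_or_prefix_of_prefix (p.bypass.support_takeUntil_prefix_support hu')
      (p.bypass.support_takeUntil_prefix_support hv') with h | h
  · exact .inl ((isAncestor_iff_mem_support hS (hp.takeUntil hv')).2
      (h.subset (Walk.end_mem_support _)))
  · exact .inr ((isAncestor_iff_mem_support hS (hp.takeUntil hu')).2
      (h.subset (Walk.end_mem_support _)))

theorem isAncestor_of_cmp_of_dist_le (hu : S.Reachable r u) (h : Cmp S r u v)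
    (hd : S.dist r u ≤ S.dist r v) : IsAncestor S r u v := by
  classical
  rcases h with h | hvu
  · exact h
  obtain ⟨p, hp, hlen⟩ := hu.exists_path_of_dist
  obtain rfl | hne := eq_or_ne v u
  · exact isAncestor_refl S r v
  have hv := hvu p hp
  have := p.length_takeUntil_lt_length hv hne
  have := S.dist_le (p.takeUntil v hv)
  omega

end Ancestor

section TreeOn

variable {V : Type*} {G S T : SimpleGraph V} {U : Set V} {r u v x y : V}

theorem mem_of_mem_support_of_adj_mem {A : Set V} (hA : ∀ a b, S.Adj a b → b ∈ A) :
    ∀ {u v : V} (p : S.Walk u v), u ∈ A → ∀ a ∈ p.support, a ∈ A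
  | _, _, .nil, hu => by simpa using hu
  | _, _, .cons h p, hu => by
    simpa [hu] using mem_of_mem_support_of_adj_mem hA p (hA _ _ h)

theorem treeOn_of_reachable (hSG : S ≤ G) (hSU : ∀ a b, S.Adj a b → a ∈ U ∧ b ∈ U)
    (hS : S.IsAcyclic) (hx : x ∈ U) (hreach : ∀ a ∈ U, S.Reachable x a) : TreeOn G S U := by
  refine ⟨hSG, hSU, (connected_iff_exists_forall_reachable _).2 ⟨⟨x, hx⟩, fun a => ?_⟩, hS.induce U⟩
  obtain ⟨p⟩ := hreach a a.2
  exact ⟨p.induce U (mem_of_mem_support_of_adj_mem (fun a b h => (hSU a b h).2) p hx)⟩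

theorem TreeOn.mem_of_mem_support (hT : TreeOn G T U) (p : T.Walk u v) (hu : u ∈ U) :
    ∀ a ∈ p.support, a ∈ U :=
  mem_of_mem_support_of_adj_mem (fun a b h => (hT.2.1 a b h).2) p hu

theorem TreeOn.reachable (hT : TreeOn G T U) (hu : u ∈ U) (hv : v ∈ U) : T.Reachable u v :=
  (hT.2.2.connected.preconnected ⟨u, hu⟩ ⟨v, hv⟩).map (Embedding.induce U).toHom

theorem TreeOn.isAcyclic (hT : TreeOn G T U) : T.IsAcyclic := by
  intro v c hc
  have hv : v ∈ U := (hT.2.1 _ _ (Walk.adj_snd hc.not_nil)).1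
  refine hT.2.2.isAcyclic (c.induce U (hT.mem_of_mem_support c hv)) ?_
  rwa [← Walk.isCycle_map_iff_of_injective (f := (Embedding.induce U).toHom)
    Subtype.val_injective, Walk.map_induce]

theorem TreeOn.mem_of_isAncestor (hT : TreeOn G T U) (hr : r ∈ U) (hv : v ∈ U) (hle : T ≤ S)
    (h : IsAncestor S r u v) : u ∈ U := by
  classical
  obtain ⟨p⟩ := hT.reachable hr hv
  exact hT.mem_of_mem_support p.bypass hr u (h.anti hle _ p.bypass_isPath)

theorem TreeOn.isAncestor_iff_of_le (hT : TreeOn G T U) (hr : r ∈ U) (hv : v ∈ U)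
    (hle : T ≤ S) (hS : S.IsAcyclic) : IsAncestor S r u v ↔ IsAncestor T r u v :=
  ⟨IsAncestor.anti hle, IsAncestor.mono hle hS (hT.reachable hr hv)⟩

theorem TreeOn.cmp_of_le (hT : TreeOn G T U) (hr : r ∈ U) (hu : u ∈ U) (hv : v ∈ U)
    (hle : T ≤ S) (hS : S.IsAcyclic) (h : Cmp T r u v) : Cmp S r u v :=
  h.imp (hT.isAncestor_iff_of_le hr hv hle hS).2 (hT.isAncestor_iff_of_le hr hu hle hS).2

end TreeOn

section SupEdge

variable {V : Type*} {G T : SimpleGraph V} {U : Set V} {r u x y : V}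

theorem sup_edge_adj_self (hxy : x ≠ y) : (T ⊔ edge x y).Adj x y :=
  Or.inr ((edge_adj ..).2 ⟨.inl ⟨rfl, rfl⟩, hxy⟩)

theorem TreeOn.isAcyclic_sup_edge (hT : TreeOn G T U) (hx : x ∈ U) (hy : y ∉ U) :
    (T ⊔ edge x y).IsAcyclic :=
  hT.isAcyclic.sup_edge_of_not_reachable fun ⟨p⟩ =>
    hy (hT.mem_of_mem_support p hx y p.end_mem_support)

theorem TreeOn.sup_edge (hT : TreeOn G T U) (hx : x ∈ U) (hy : y ∉ U) (hxy : G.Adj x y) :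
    TreeOn G (T ⊔ edge x y) (insert y U) := by
  refine treeOn_of_reachable (sup_le hT.1 ((edge_le_iff G).2 (.inr hxy))) ?_
    (hT.isAcyclic_sup_edge hx hy) (Set.mem_insert_of_mem y hx) ?_
  · rintro a b (h | h)
    · exact ⟨.inr (hT.2.1 a b h).1, .inr (hT.2.1 a b h).2⟩
    · rcases ((edge_adj ..).1 h).1 with ⟨rfl, rfl⟩ | ⟨rfl, rfl⟩
      · exact ⟨.inr hx, .inl rfl⟩
      · exact ⟨.inl rfl, .inr hx⟩
  · rintro a (rfl | ha)
    · exact (sup_edge_adj_self hxy.ne).reachable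
    · exact (hT.reachable hx ha).mono le_sup_left

/-- The path to `y` in `T ⊔ edge x y` is the path to `x` followed by the new edge. -/
theorem TreeOn.isAncestor_sup_edge_iff (hT : TreeOn G T U) (hr : r ∈ U) (hx : x ∈ U)
    (hy : y ∉ U) (hu : u ∈ U) : IsAncestor (T ⊔ edge x y) r u y ↔ IsAncestor T r u x := by
  classical
  obtain ⟨p⟩ := hT.reachable hr hx
  have hp := p.bypass_isPath
  have hxy : (T ⊔ edge x y).Adj x y := sup_edge_adj_self (ne_of_mem_of_not_mem hx hy)
  have hyp : y ∉ (p.bypass.mapLe (le_sup_left : T ≤ T ⊔ edge x y)).support := by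
    rw [Walk.support_mapLe_eq_support]
    exact fun h => hy (hT.mem_of_mem_support _ hr y h)
  rw [isAncestor_iff_mem_support hT.isAcyclic hp, isAncestor_iff_mem_support
    (hT.isAcyclic_sup_edge hx hy) ((hp.mapLe le_sup_left).concat hyp hxy),
    Walk.support_concat, Walk.support_mapLe_eq_support, List.mem_append, List.mem_singleton,
    or_iff_left (ne_of_mem_of_not_mem hu hy)]

end SupEdge

section Components

variable {V : Type*} {G : SimpleGraph V} {U : Set V} {a b v w y : V}

theorem mem_compOf_self (hv : v ∉ U) : v ∈ compOf G U v := ⟨hv, hv, .refl _⟩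

theorem notMem_of_mem_compOf (ha : a ∈ compOf G U v) : a ∉ U := ha.2.1

theorem compOf_eq_of_mem (ha : a ∈ compOf G U v) : compOf G U a = compOf G U v := by
  obtain ⟨hv, ha, hva⟩ := ha
  ext b
  exact ⟨fun ⟨_, hb, hab⟩ => ⟨hv, hb, hva.trans hab⟩,
    fun ⟨_, hb, hvb⟩ => ⟨ha, hb, hva.symm.trans hvb⟩⟩

theorem mem_compOf_symm (ha : a ∈ compOf G U v) : v ∈ compOf G U a :=
  compOf_eq_of_mem ha ▸ mem_compOf_self ha.1

theorem mem_compOf_of_adj (hab : G.Adj a b) (ha : a ∉ U) (hb : b ∉ U) : b ∈ compOf G U a :=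
  ⟨ha, hb, (induce_adj.2 hab : (G.induce Uᶜ).Adj ⟨a, ha⟩ ⟨b, hb⟩).reachable⟩

theorem mem_compOf_of_mem_support {s t : ↥Uᶜ} (p : (G.induce Uᶜ).Walk s t) {b : ↥Uᶜ}
    (hb : b ∈ p.support) : (b : V) ∈ compOf G U s := by
  classical
  exact ⟨s.2, b.2, ⟨p.takeUntil b hb⟩⟩

theorem mem_compOf_of_adj_of_mem (ha : a ∈ compOf G U v) (hab : G.Adj a b) (hb : b ∉ U) :
    b ∈ compOf G U v :=
  compOf_eq_of_mem ha ▸ mem_compOf_of_adj hab (notMem_of_mem_compOf ha) hb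

theorem isAttachment_congr (ha : a ∈ compOf G U v) :
    IsAttachment G U a w ↔ IsAttachment G U v w := by
  rw [IsAttachment, IsAttachment, compOf_eq_of_mem ha]

/-- The first vertex of `p` in `U` is such a `z`. -/
theorem exists_mem_support_isAttachment :
    ∀ {v w : V} (p : G.Walk v w), v ∉ U → w ∈ U → ∃ z ∈ p.support, IsAttachment G U v z
  | _, _, .nil, hv, hw => absurd hw hv
  | v, _, .cons (v := t) h p, hv, hw => by
    by_cases ht : t ∈ U
    · exact ⟨t, by simp, ht, v, mem_compOf_self hv, h.symm⟩
    · obtain ⟨z, hz, hatt⟩ := exists_mem_support_isAttachment p ht hw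
      exact ⟨z, by simp [hz], (isAttachment_congr (mem_compOf_of_adj h hv ht)).1 hatt⟩

theorem compOf_insert_subset (hv : v ∉ insert y U) : compOf G (insert y U) v ⊆ compOf G U v :=
  fun _ ⟨_, ha, hreach⟩ =>
    ⟨fun h => hv (.inr h), fun h => ha (.inr h),
      hreach.map (G.induceHomOfLE (Set.compl_subset_compl.2 (Set.subset_insert y U))).toHom⟩

theorem compOf_subset_compOf_insert (hyv : y ∉ compOf G U v) :
    compOf G U v ⊆ compOf G (insert y U) v := by
  rintro a ⟨_, ha, hreach⟩
  obtain ⟨p⟩ := hreach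
  have hsupp : ∀ b ∈ (p.map (Embedding.induce Uᶜ).toHom).support, b ∈ (insert y U)ᶜ := by
    simp only [Walk.support_map, List.mem_map]
    rintro _ ⟨b, hb, rfl⟩ (hby | hbU)
    · exact hyv (hby ▸ mem_compOf_of_mem_support p hb)
    · exact b.2 hbU
  exact ⟨hsupp v (Walk.start_mem_support _), hsupp a (Walk.end_mem_support _),
    ⟨(p.map (Embedding.induce Uᶜ).toHom).induce _ hsupp⟩⟩

theorem IsAttachment.of_insert (h : IsAttachment G (insert y U) v w) (hv : v ∉ insert y U)
    (hw : w ∈ U) : IsAttachment G U v w :=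
  ⟨hw, h.2.imp fun _ ha => ⟨compOf_insert_subset hv ha.1, ha.2⟩⟩

theorem isAttachment_insert_self (hv : v ∈ compOf G U y) (hvy : v ≠ y) :
    IsAttachment G (insert y U) v y := by
  obtain ⟨hvU, hy, hreach⟩ := mem_compOf_symm hv
  obtain ⟨p⟩ := hreach
  obtain ⟨z, hz, hatt⟩ := exists_mem_support_isAttachment
    (p.map (Embedding.induce Uᶜ).toHom) (U := insert y U) (by rintro (h | h) <;> contradiction)
    (.inl rfl)
  simp only [Walk.support_map, List.mem_map] at hz
  obtain ⟨b, -, rfl⟩ := hz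
  obtain rfl : (b : V) = y := hatt.1.resolve_right b.2
  exact hatt

theorem isAttachment_insert_iff (hvy : v ∉ compOf G U y) (hy : y ∉ U) (hv : v ∉ U) :
    IsAttachment G (insert y U) v w ↔ IsAttachment G U v w := by
  have hyv : y ∉ compOf G U v := fun h => hvy (mem_compOf_symm h)
  have hv' : v ∉ insert y U := by
    rintro (rfl | h)
    exacts [hvy (mem_compOf_self hy), hv h]
  constructor
  · intro h
    obtain ⟨rfl | hw, a, ha, hwa⟩ := id h
    · exact absurd (mem_compOf_of_adj_of_mem (compOf_insert_subset hv' ha) hwa.symm hy) hyv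
    · exact h.of_insert hv' hw
  · rintro ⟨hw, a, ha, hwa⟩
    exact ⟨.inr hw, a, compOf_subset_compOf_insert hyv ha, hwa⟩

end Components

section Invariants

variable {V : Type*} {G T : SimpleGraph V} {U : Set V} {r v x y : V}

/-- By `I₂` all attachments of a component are comparable, so they lie on the path to the
deepest one. -/
theorem isAncestor_of_isAttachment_of_depth_le (hT : TreeOn G T U) (hr : r ∈ U)
    (h2 : Inv2 G T U r) (hx : IsAttachment G U v x)
    (hdeep : ∀ w, IsAttachment G U v w → depth T r w ≤ depth T r x) {w : V}
    (hw : IsAttachment G U v w) : IsAncestor T r w x := by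
  obtain ⟨hwU, a, ⟨_, ha, hva⟩, hwa⟩ := hw
  obtain ⟨hxU, b, ⟨_, hb, hvb⟩, hxb⟩ := hx
  exact isAncestor_of_cmp_of_dist_le (hT.reachable hr hwU)
    (h2 a b ha hb (hva.symm.trans hvb) w x hwU hxU hwa hxb)
    (hdeep w ⟨hwU, a, ⟨_, ha, hva⟩, hwa⟩)

theorem isAncestor_sup_edge_of_adj (hT : TreeOn G T U) (hr : r ∈ U) (hx : x ∈ U) (hy : y ∉ U)
    (hbelow : ∀ w, IsAttachment G U y w → IsAncestor T r w x) {w t : V}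
    (hw : w ∈ insert y U) (ht : t ∈ compOf G U y) (hwt : G.Adj w t) :
    IsAncestor (T ⊔ edge x y) r w y := by
  rcases hw with rfl | hw
  · exact isAncestor_refl _ _ _
  · exact (hT.isAncestor_sup_edge_iff hr hx hy hw).2 (hbelow w ⟨hw, t, ht, hwt⟩)

theorem Inv1.sup_edge (h1 : Inv1 G T U r) (hT : TreeOn G T U) (hr : r ∈ U) (hx : x ∈ U)
    (hy : y ∉ U) (hbelow : ∀ w, IsAttachment G U y w → IsAncestor T r w x) :
    Inv1 G (T ⊔ edge x y) (insert y U) r := by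
  have hS := hT.isAcyclic_sup_edge hx hy
  rintro u v huv (rfl | hu) (rfl | hv)
  · exact absurd rfl huv.ne
  · exact .inr (isAncestor_sup_edge_of_adj hT hr hx hy hbelow (.inr hv) (mem_compOf_self hy)
      huv.symm)
  · exact .inl (isAncestor_sup_edge_of_adj hT hr hx hy hbelow (.inr hu) (mem_compOf_self hy)
      huv)
  · exact hT.cmp_of_le hr hu hv le_sup_left hS (h1 u v huv hu hv)

theorem Inv2.sup_edge (h2 : Inv2 G T U r) (hT : TreeOn G T U) (hr : r ∈ U) (hx : x ∈ U)
    (hy : y ∉ U) (hxy : G.Adj x y) (hbelow : ∀ w, IsAttachment G U y w → IsAncestor T r w x) :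
    Inv2 G (T ⊔ edge x y) (insert y U) r := by
  intro u v hu hv huv w z hw hz hwu hzv
  have huU : u ∉ U := fun h => hu (.inr h)
  have hvU : v ∉ U := fun h => hv (.inr h)
  have huv' := huv.map (G.induceHomOfLE (Set.compl_subset_compl.2 (Set.subset_insert y U))).toHom
  have hvu : v ∈ compOf G U u := ⟨huU, hvU, huv'⟩
  by_cases huy : u ∈ compOf G U y
  · have hT' := hT.sup_edge hx hy hxy
    exact cmp_of_isAncestor_of_isAncestor hT'.isAcyclic (hT'.reachable (.inr hr) (.inl rfl))
      (isAncestor_sup_edge_of_adj hT hr hx hy hbelow hw huy hwu)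
      (isAncestor_sup_edge_of_adj hT hr hx hy hbelow hz (compOf_eq_of_mem huy ▸ hvu) hzv)
  · have hwU : w ∈ U := by
      rcases hw with rfl | hw
      exacts [absurd (mem_compOf_of_adj hwu hy huU) huy, hw]
    have hzU : z ∈ U := by
      rcases hz with rfl | hz
      exacts [absurd (compOf_eq_of_mem (mem_compOf_of_adj hzv hy hvU) ▸ mem_compOf_symm hvu)
        huy, hz]
    exact hT.cmp_of_le hr hwU hzU le_sup_left (hT.isAcyclic_sup_edge hx hy)
      (h2 u v huU hvU huv' w z hwU hzU hwu hzv)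

end Invariants

section Hanging

variable {V : Type*} {G T T' Ts : SimpleGraph V} {U : Set V} {r v x y : V}

/-- The component of `y` hangs below `x`; every other component of `G[V∖U]` is still a
component once `y` joins `U`. -/
theorem HangsBelowAttachments.of_sup_edge (hT : TreeOn G T U) (hr : r ∈ U) (hx : x ∈ U)
    (hy : y ∉ U) (hxy : G.Adj x y) (hbelow : ∀ w, IsAttachment G U y w → IsAncestor T r w x)
    (hle : T ⊔ edge x y ≤ Ts) (hTs : Ts.IsAcyclic)
    (hang : HangsBelowAttachments G (T ⊔ edge x y) Ts (insert y U) r) :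
    HangsBelowAttachments G T Ts U r := by
  have hT' := hT.sup_edge hx hy hxy
  have hS := hT.isAcyclic_sup_edge hx hy
  intro v hv u hu
  by_cases hvy : v ∈ compOf G U y
  · have hy_iff : IsAncestor (T ⊔ edge x y) r u y ↔
        ∃ w, IsAttachment G U y w ∧ IsAncestor T r u w :=
      (hT.isAncestor_sup_edge_iff hr hx hy hu).trans
        ⟨fun h => ⟨x, ⟨hx, y, mem_compOf_self hy, hxy⟩, h⟩,
          fun ⟨w, hw, huw⟩ => huw.trans (hbelow w hw)⟩
    simp only [isAttachment_congr hvy, ← hy_iff]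
    obtain rfl | hvy' := eq_or_ne v y
    · exact hT'.isAncestor_iff_of_le (.inr hr) (.inl rfl) hle hTs
    have hv' : v ∉ insert y U := by rintro (h | h) <;> contradiction
    rw [hang v hv' u (.inr hu)]
    refine ⟨fun ⟨w, hw, huw⟩ => ?_, fun h => ⟨y, isAttachment_insert_self hvy hvy', h⟩⟩
    rcases hw.1 with rfl | hwU
    · exact huw
    · exact huw.trans ((hT.isAncestor_sup_edge_iff hr hx hy hwU).2
        (hbelow w ((isAttachment_congr hvy).1 (hw.of_insert hv' hwU))))
  · have hv' : v ∉ insert y U := by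
      rintro (rfl | h)
      exacts [hvy (mem_compOf_self hy), hv h]
    rw [hang v hv' u (.inr hu)]
    refine exists_congr fun w => ?_
    rw [isAttachment_insert_iff hvy hy hv]
    exact and_congr_right fun hw => hT.isAncestor_iff_of_le hr hw.1 le_sup_left hS

theorem mem_compOf_iff_isAncestor (hT : TreeOn G T U) (hr : r ∈ U) (hy : y ∉ U) (hTT' : T ≤ T')
    (hle : T' ≤ Ts) (hang : HangsBelowAttachments G T' Ts (insert y U) r) :
    v ∈ compOf G U y ↔ IsAncestor Ts r y v := by
  obtain rfl | hvy := eq_or_ne v y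
  · exact iff_of_true (mem_compOf_self hy) (isAncestor_refl _ _ _)
  by_cases hvU : v ∈ U
  · exact iff_of_false (fun h => notMem_of_mem_compOf h hvU)
      fun h => hy (hT.mem_of_isAncestor hr hvU (hTT'.trans hle) h)
  have hv' : v ∉ insert y U := by rintro (h | h) <;> contradiction
  rw [hang v hv' y (.inl rfl)]
  refine ⟨fun h => ⟨y, isAttachment_insert_self h hvy, isAncestor_refl _ _ _⟩, ?_⟩
  rintro ⟨w, ⟨rfl | hwU, a, ha, hwa⟩, hyw⟩
  · exact mem_compOf_symm (mem_compOf_of_adj_of_mem (compOf_insert_subset hv' ha) hwa.symm hy)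
  · exact absurd (hT.mem_of_isAncestor hr hwU hTT' hyw) hy

end Hanging

theorem exists_isDFSTree_hangsBelowAttachments {V : Type*} [Finite V] {G : SimpleGraph V}
    (hG : G.Connected) {r : V} {U : Set V} {T : SimpleGraph V} (hr : r ∈ U)
    (hT : TreeOn G T U) (h1 : Inv1 G T U r) (h2 : Inv2 G T U r) :
    ∃ Ts, T ≤ Ts ∧ IsDFSTree G Ts r ∧ HangsBelowAttachments G T Ts U r := by
  induction hn : Uᶜ.ncard generalizing U T with
  | zero =>
    obtain rfl : U = Set.univ := Set.compl_empty_iff.1 ((Set.ncard_eq_zero (Set.toFinite _)).1 hn)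
    exact ⟨T, le_rfl, ⟨hT.1, ⟨(connected_iff_exists_forall_reachable _).2
      ⟨r, fun v => hT.reachable hr trivial⟩, hT.isAcyclic⟩,
      fun u v huv => h1 u v huv trivial trivial⟩, fun v hv => absurd trivial hv⟩
  | succ n ih =>
    obtain ⟨v, hv⟩ := Set.nonempty_of_ncard_ne_zero (hn.trans_ne n.succ_ne_zero)
    obtain ⟨p⟩ := hG.preconnected v r
    obtain ⟨x, hx, hdeep⟩ := Set.exists_max_image {w | IsAttachment G U v w} (depth T r)
      (Set.toFinite _) ((exists_mem_support_isAttachment p hv hr).imp fun _ => And.right)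
    obtain ⟨hxU, y, hyv, hxy⟩ := hx
    have hy : y ∉ U := notMem_of_mem_compOf hyv
    have hbelow : ∀ w, IsAttachment G U y w → IsAncestor T r w x := fun w hw =>
      isAncestor_of_isAttachment_of_depth_le hT hr h2 ⟨hxU, y, hyv, hxy⟩ hdeep
        ((isAttachment_congr hyv).1 hw)
    have hn' : (insert y U)ᶜ.ncard = n := by
      rw [Set.insert_eq, Set.compl_union, Set.inter_comm, ← Set.sdiff_eq,
        Set.ncard_sdiff_singleton_of_mem hy, hn, Nat.add_sub_cancel]
    obtain ⟨Ts, hle, hdfs, hang⟩ := ih (.inr hr) (hT.sup_edge hxU hy hxy)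
      (h1.sup_edge hT hr hxU hy hbelow) (h2.sup_edge hT hr hxU hy hxy hbelow) hn'
    exact ⟨Ts, le_sup_left.trans hle, hdfs,
      hang.of_sup_edge hT hr hxU hy hxy hbelow hle hdfs.2.1.isAcyclic⟩

theorem components_property_general {V : Type*} [Fintype V]
    (G T : SimpleGraph V) (U : Set V) (r : V)
    (hG : G.Connected) (hr : r ∈ U)
    (hT : TreeOn G T U) (h1 : Inv1 G T U r) (h2 : Inv2 G T U r)
    (c₀ : V)
    (x : V) (hx : x ∈ U)
    (hdeep : ∀ w, w ∈ U → (∃ a ∈ compOf G U c₀, G.Adj w a) →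
      depth T r w ≤ depth T r x)
    (y : V) (hy : y ∈ compOf G U c₀) (hxy : G.Adj x y) :
    ∃ Tstar : SimpleGraph V, T ≤ Tstar ∧ Tstar ≤ G ∧ Tstar.IsTree ∧
      (∀ u v, G.Adj u v → Cmp Tstar r u v) ∧
      Tstar.Adj x y ∧
      (∀ v, v ∈ compOf G U c₀ ↔ IsAncestor Tstar r y v) ∧
      (∀ w z, G.Adj w z → w ∈ U → z ∈ compOf G U c₀ → IsAncestor Tstar r w z) := by
  have hyU : y ∉ U := notMem_of_mem_compOf hy
  have hbelow : ∀ w, IsAttachment G U y w → IsAncestor T r w x := fun w hw =>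
    isAncestor_of_isAttachment_of_depth_le hT hr h2 ⟨hx, y, hy, hxy⟩
      (fun w hw => hdeep w hw.1 hw.2) ((isAttachment_congr hy).1 hw)
  obtain ⟨Ts, hle, ⟨hTsG, hTs, hcmp⟩, hang'⟩ := exists_isDFSTree_hangsBelowAttachments hG
    (.inr hr) (hT.sup_edge hx hyU hxy) (h1.sup_edge hT hr hx hyU hbelow)
    (h2.sup_edge hT hr hx hyU hxy hbelow)
  have hang := hang'.of_sup_edge hT hr hx hyU hxy hbelow hle hTs.isAcyclic
  refine ⟨Ts, le_sup_left.trans hle, hTsG, hTs, hcmp, hle (sup_edge_adj_self hxy.ne),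
    fun v => ?_, fun w z hwz hw hz => ?_⟩
  · rw [← compOf_eq_of_mem hy]
    exact mem_compOf_iff_isAncestor hT hr hyU le_sup_left hle hang'
  · have hzU := notMem_of_mem_compOf hz
    exact (hang z hzU w hw).2 ⟨w, ⟨hw, z, mem_compOf_self hzU, hwz⟩, isAncestor_refl _ _ _⟩

/-- Static rendering of the **Components Property** (Lemma 2.1).  Let `T` be a partially
built DFS tree on `U ⊊ V` satisfying invariants `I₁` and `I₂`, let `C` be the component
of `G[V∖U]` containing `c₀`, let `x` be the deepest vertex of `U` adjacent to `C`, and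
let `y ∈ C` be adjacent to `x`.  Then there is a DFS tree `T*` of `G` rooted at `r`
containing the edges of `T`, in which `{x, y}` is a tree edge and the vertex set of `C`
is exactly the subtree of `T*` rooted at `y`; consequently every edge of `G` from `U`
into `C` other than `{x, y}` is a back edge of `T*` (its `U`-endpoint is an ancestor of
its `C`-endpoint). -/
theorem components_property {V : Type*} [Fintype V]
    (G T : SimpleGraph V) (U : Set V) (r : V)
    (hG : G.Connected) (hU : U.Nonempty) (hUV : U ≠ Set.univ) (hr : r ∈ U)
    (hT : TreeOn G T U) (h1 : Inv1 G T U r) (h2 : Inv2 G T U r)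
    (c₀ : V) (hc₀ : c₀ ∉ U)
    (x : V) (hx : x ∈ U) (hxC : ∃ a ∈ compOf G U c₀, G.Adj x a)
    (hdeep : ∀ w, w ∈ U → (∃ a ∈ compOf G U c₀, G.Adj w a) →
      depth T r w ≤ depth T r x)
    (y : V) (hy : y ∈ compOf G U c₀) (hxy : G.Adj x y) :
    ∃ Tstar : SimpleGraph V, T ≤ Tstar ∧ Tstar ≤ G ∧ Tstar.IsTree ∧
      (∀ u v, G.Adj u v → Cmp Tstar r u v) ∧
      Tstar.Adj x y ∧
      (∀ v, v ∈ compOf G U c₀ ↔ IsAncestor Tstar r y v) ∧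
      (∀ w z, G.Adj w z → w ∈ U → z ∈ compOf G U c₀ → IsAncestor Tstar r w z) :=
  components_property_general G T U r hG hr hT h1 h2 c₀ x hx hdeep y hy hxy

end StreamDFS
end
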